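/- arXiv:1010.4844 — 4 statements merged into one kernel-verified Lean document; each statement's English description precedes it below -/
import Mathlib

section
/- Let n ≥ 1 be a natural number, let f : ℝ → ℝ be of class C^{n−1}, and suppose the (n−1)-st derivative f^{(n−1)} is Lipschitz with constant K ≥ 0. Then for all t ∈ ℝ and all m₁, …, mₙ ∈ ℝ, |Σ_{I ⊆ {1,…,n}} (−1)^{|I|} f(t + Σ_{j∈I} m_j)| ≤ K · ∏_{j=1}^{n} |m_j|. -/
/-!
Removing one index `a` from the alternating subset sum of `f` leaves, up to sign, the alternating
subset sum of the forward difference `Δ_[m a] f` over the remaining indices. By the mean value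
theorem, if the `(k+1)`-st derivative of `f` is `K`-Lipschitz, then the `k`-th derivative of
`Δ_[c] f`, which is `Δ_[c]` of the `k`-th derivative of `f`, is `K‖c‖`-Lipschitz. Induction on
the number of indices then peels off one factor `‖m a‖` at a time, ending with the Lipschitz
bound `‖f (t + c) - f t‖ ≤ K‖c‖` itself.
-/

open Finset
open scoped fwdDiff NNReal

section AlternatingSubsetSum

variable {ι M G : Type*} [AddCommMonoid M] [AddCommGroup G]

def alternatingSubsetSum (f : M → G) (t : M) (m : ι → M) (s : Finset ι) : G :=
  ∑ I ∈ s.powerset, (-1 : ℤ) ^ I.card • f (t + ∑ j ∈ I, m j)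

lemma alternatingSubsetSum_empty (f : M → G) (t : M) (m : ι → M) :
    alternatingSubsetSum f t m ∅ = f t := by
  simp [alternatingSubsetSum]

lemma alternatingSubsetSum_cons (f : M → G) (t : M) (m : ι → M) {a : ι} {s : Finset ι}
    (ha : a ∉ s) :
    alternatingSubsetSum f t m (s.cons a ha) = -alternatingSubsetSum (Δ_[m a] f) t m s := by
  classical
  rw [alternatingSubsetSum, cons_eq_insert, sum_powerset_insert ha, alternatingSubsetSum,
    ← sum_add_distrib, ← sum_neg_distrib]
  refine sum_congr rfl fun I hI => ?_
  have haI : a ∉ I := fun h => ha (mem_powerset.1 hI h)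
  rw [card_insert_of_notMem haI, sum_insert haI, fwdDiff, add_left_comm, add_comm (m a), pow_succ,
    mul_neg_one, neg_smul, smul_sub]
  abel

end AlternatingSubsetSum

section FwdDiff

variable {𝕜 E : Type*} [RCLike 𝕜] [NormedAddCommGroup E] [NormedSpace 𝕜 E]

lemma ContDiff.fwdDiff {n : WithTop ℕ∞} {f : 𝕜 → E} (hf : ContDiff 𝕜 n f) (c : 𝕜) :
    ContDiff 𝕜 n (Δ_[c] f) :=
  (hf.comp (contDiff_id.add contDiff_const)).sub hf

lemma iteratedDeriv_fwdDiff {k : ℕ} {f : 𝕜 → E} (hf : ContDiff 𝕜 k f) (c : 𝕜) :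
    iteratedDeriv k (Δ_[c] f) = Δ_[c] (iteratedDeriv k f) := by
  have hshift : ContDiff 𝕜 k fun x => f (x + c) := hf.comp (contDiff_id.add contDiff_const)
  ext x
  change iteratedDeriv k (fun x => f (x + c) - f x) x = _
  rw [iteratedDeriv_fun_sub hshift.contDiffAt hf.contDiffAt, iteratedDeriv_comp_add_const]
  rfl

lemma LipschitzWith.fwdDiff_of_deriv {K : ℝ≥0} {f : 𝕜 → E} (hf : Differentiable 𝕜 f)
    (hK : LipschitzWith K (deriv f)) (c : 𝕜) : LipschitzWith (K * ‖c‖₊) (Δ_[c] f) := by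
  have hshift : Differentiable 𝕜 fun x => f (x + c) := hf.comp (differentiable_id.add_const c)
  refine lipschitzWith_of_nnnorm_deriv_le (hshift.sub hf) fun x => ?_
  have hderiv : deriv (Δ_[c] f) x = deriv f (x + c) - deriv f x := by
    change deriv (fun x => f (x + c) - f x) x = _
    rw [deriv_fun_sub (hshift x) (hf x), deriv_comp_add_const]
  calc ‖deriv (Δ_[c] f) x‖₊ = nndist (deriv f (x + c)) (deriv f x) := by
        rw [hderiv, nndist_eq_nnnorm]
    _ ≤ K * nndist (x + c) x := hK.nndist_le (x + c) x
    _ = K * ‖c‖₊ := by rw [nndist_eq_nnnorm, add_sub_cancel_left]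

end FwdDiff

theorem norm_alternatingSubsetSum_le {ι 𝕜 E : Type*} [RCLike 𝕜] [NormedAddCommGroup E]
    [NormedSpace 𝕜 E] {s : Finset ι} (hs : s.Nonempty) {f : 𝕜 → E} {K : ℝ≥0}
    (hf : ContDiff 𝕜 (s.card - 1 : ℕ) f) (hlip : LipschitzWith K (iteratedDeriv (s.card - 1) f))
    (t : 𝕜) (m : ι → 𝕜) :
    ‖alternatingSubsetSum f t m s‖ ≤ K * ∏ j ∈ s, ‖m j‖ := by
  induction hs using Finset.Nonempty.cons_induction generalizing f K with
  | singleton a =>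
    rw [← cons_empty a, alternatingSubsetSum_cons, alternatingSubsetSum_empty, norm_neg,
      prod_cons, prod_empty, mul_one]
    simp only [card_singleton, tsub_self, iteratedDeriv_zero] at hlip
    simpa [fwdDiff, ← dist_eq_norm] using hlip.dist_le_mul (t + m a) t
  | cons a s ha hs ih =>
    obtain ⟨k, hk⟩ : ∃ k, s.card = k + 1 := Nat.exists_eq_add_one.2 hs.card_pos
    rw [card_cons, hk, Nat.add_sub_cancel] at hf hlip
    rw [iteratedDeriv_succ] at hlip
    rw [hk, Nat.add_sub_cancel] at ih
    have hfk : ContDiff 𝕜 k f := hf.of_le (by norm_cast; omega)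
    have hΔ := hlip.fwdDiff_of_deriv (hf.differentiable_iteratedDeriv k (by norm_cast; omega)) (m a)
    rw [← iteratedDeriv_fwdDiff hfk] at hΔ
    calc ‖alternatingSubsetSum f t m (s.cons a ha)‖
        = ‖alternatingSubsetSum (Δ_[m a] f) t m s‖ := by rw [alternatingSubsetSum_cons, norm_neg]
      _ ≤ ↑(K * ‖m a‖₊) * ∏ j ∈ s, ‖m j‖ := ih (hfk.fwdDiff _) hΔ
      _ = K * ∏ j ∈ s.cons a ha, ‖m j‖ := by rw [prod_cons]; push_cast; ring

theorem alternating_difference_bound_general (n : ℕ) (hn : 1 ≤ n) (f : ℝ → ℝ) (K : ℝ)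
    (hf : ContDiff ℝ (n - 1 : ℕ) f)
    (hlip : ∀ s t : ℝ,
      |iteratedDeriv (n - 1) f s - iteratedDeriv (n - 1) f t| ≤ K * |s - t|)
    (t : ℝ) (m : Fin n → ℝ) :
    |∑ I : Finset (Fin n), (-1 : ℝ) ^ I.card * f (t + ∑ j ∈ I, m j)| ≤
      K * ∏ j, |m j| := by
  have hK : 0 ≤ K := by simpa using (abs_nonneg _).trans (hlip 1 0)
  have hcard : (univ : Finset (Fin n)).card = n := card_fin n
  have hK' : LipschitzWith K.toNNReal (iteratedDeriv (n - 1) f) :=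
    .of_dist_le' fun x y => by simpa only [Real.dist_eq] using hlip x y
  have := norm_alternatingSubsetSum_le ⟨⟨0, hn⟩, mem_univ _⟩ (hcard ▸ hf) (hcard ▸ hK') t m
  simpa [alternatingSubsetSum, hK] using this

/-- If `f : ℝ → ℝ` is of class `C^{n-1}` and its `(n-1)`-st derivative is Lipschitz with
constant `K`, then the alternating sum over subsets `I ⊆ {1,…,n}` of
`(-1)^{|I|} f(t + ∑_{j∈I} m_j)` is bounded by `K · ∏ |m_j|`. -/
theorem alternating_difference_bound (n : ℕ) (hn : 1 ≤ n) (f : ℝ → ℝ) (K : ℝ) (hK : 0 ≤ K)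
    (hf : ContDiff ℝ (n - 1 : ℕ) f)
    (hlip : ∀ s t : ℝ,
      |iteratedDeriv (n - 1) f s - iteratedDeriv (n - 1) f t| ≤ K * |s - t|)
    (t : ℝ) (m : Fin n → ℝ) :
    |∑ I : Finset (Fin n), (-1 : ℝ) ^ I.card * f (t + ∑ j ∈ I, m j)| ≤
      K * ∏ j, |m j| :=
  alternating_difference_bound_general n hn f K hf hlip t m
end

section
/- Define the sequence of functions pₙ : ℤ^{n+1} → ℂ recursively by p₀(m₀) = |m₀| and p_{n+1}(m₀,…,m_{n+1}) = (2πi)·[(m₀ + ⋯ + mₙ)·pₙ(m₀,…,mₙ) − Σ_{j=0}^{n} m_j · pₙ(m₀,…,m_j + m_{n+1},…,mₙ)] (where in the j-th summand the argument m_j is replaced by m_j + m_{n+1}). Then for all n ≥ 1 and all m₀,…,mₙ ∈ ℤ, pₙ(m₀, m₁, …, mₙ) = (2πi)ⁿ · m₀ · Σ_{I ⊆ {1,…,n}} (−1)^{|I|} fₙ(m₀ + Σ_{j∈I} m_j), where fₙ(t) = t^{n−1}·|t|. -/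
open Real

open Finset in
private lemma sum_finset_split {β : Type*} [AddCommMonoid β] (n : ℕ) (g : Finset (Fin (n+1)) → β) :
    ∑ J : Finset (Fin (n+1)), g J =
      ∑ I : Finset (Fin n),
        (g (I.map Fin.castSuccEmb) + g (insert (Fin.last n) (I.map Fin.castSuccEmb))) := by
  have huniv : (univ : Finset (Fin (n+1))) = insert (Fin.last n) (univ.map Fin.castSuccEmb) := by
    ext i
    simp only [mem_insert, mem_map, mem_univ, true_and, true_iff]
    rcases Fin.eq_castSucc_or_eq_last i with ⟨j, rfl⟩ | rfl
    · exact Or.inr ⟨j, rfl⟩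
    · exact Or.inl rfl
  have hlast : Fin.last n ∉ (univ : Finset (Fin n)).map Fin.castSuccEmb := by
    simp only [mem_map, mem_univ, true_and, not_exists]
    intro j h
    exact (Fin.castSucc_lt_last j).ne h
  have hps : ((univ : Finset (Fin n)).map Fin.castSuccEmb).powerset
      = (univ : Finset (Finset (Fin n))).map
          ⟨fun I => I.map Fin.castSuccEmb, fun a b h => Finset.map_injective _ h⟩ := by
    ext J
    simp only [mem_powerset, mem_map, mem_univ, true_and, Function.Embedding.coeFn_mk]
    rw [Finset.subset_map_iff]
    constructor
    · rintro ⟨u, _, rfl⟩; exact ⟨u, rfl⟩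
    · rintro ⟨u, rfl⟩; exact ⟨u, subset_univ u, rfl⟩
  rw [← Finset.powerset_univ, huniv, Finset.sum_powerset_insert hlast, hps,
    Finset.sum_map, Finset.sum_map, ← Finset.sum_add_distrib]
  rfl

open Finset in
private lemma key_identity (n : ℕ) (μ : Fin n → ℂ) (m0 M : ℂ) (A B : Finset (Fin n) → ℂ) :
    (m0 + ∑ k, μ k) * (∑ I : Finset (Fin n), (-1 : ℂ)^I.card * A I)
      - ((m0 + M) * (∑ I : Finset (Fin n), (-1 : ℂ)^I.card * B I)
        + ∑ k : Fin n, μ k * ∑ I : Finset (Fin n), (-1 : ℂ)^I.card * (if k ∈ I then B I else A I))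
    = ∑ I : Finset (Fin n), (-1 : ℂ)^I.card *
        ((m0 + ∑ k ∈ I, μ k) * A I - (m0 + ∑ k ∈ I, μ k + M) * B I) := by
  have hswap : (∑ k : Fin n, μ k * ∑ I : Finset (Fin n), (-1 : ℂ)^I.card * (if k ∈ I then B I else A I))
      = ∑ I : Finset (Fin n), ((∑ k ∈ I, μ k) * ((-1:ℂ)^I.card * B I)
          + (∑ k ∈ univ \ I, μ k) * ((-1:ℂ)^I.card * A I)) := by
    simp_rw [Finset.mul_sum]
    rw [Finset.sum_comm]
    refine Finset.sum_congr rfl fun I _ => ?_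
    calc ∑ k : Fin n, μ k * ((-1:ℂ)^I.card * (if k ∈ I then B I else A I))
        = ∑ k : Fin n, (if k ∈ I then μ k * ((-1:ℂ)^I.card * B I) else μ k * ((-1:ℂ)^I.card * A I)) := by
          refine Finset.sum_congr rfl fun k _ => ?_
          split_ifs <;> ring
      _ = _ := by
          rw [Finset.sum_ite, Finset.filter_univ_mem, Finset.filter_not, Finset.filter_univ_mem,
            ← Finset.sum_mul, ← Finset.sum_mul]
  rw [hswap, Finset.mul_sum, Finset.mul_sum, ← Finset.sum_add_distrib, ← Finset.sum_sub_distrib]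
  refine Finset.sum_congr rfl fun I _ => ?_
  have hT : ((∑ k ∈ univ \ I, μ k) + ∑ k ∈ I, μ k) = ∑ k, μ k := Finset.sum_sdiff (subset_univ I)
  linear_combination (-((-1:ℂ)^I.card * A I)) * hT

/-- If `p₀(m₀) = |m₀|` and
`p_{n+1}(m₀,…,m_{n+1}) = 2πi·[(m₀+⋯+mₙ)·pₙ(m₀,…,mₙ) − Σ_{j=0}^n m_j·pₙ(m₀,…,m_j+m_{n+1},…,mₙ)]`,
then for `n ≥ 1`,
`pₙ(m₀,…,mₙ) = (2πi)ⁿ·m₀·Σ_{I ⊆ {1,…,n}} (−1)^{|I|} fₙ(m₀ + Σ_{j∈I} m_j)`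
where `fₙ(t) = t^{n-1}·|t|`. -/
theorem symbol_formula
    (p : ∀ n : ℕ, (Fin (n + 1) → ℤ) → ℂ)
    (h0 : ∀ m : Fin 1 → ℤ, p 0 m = ((|m 0| : ℤ) : ℂ))
    (hrec : ∀ n : ℕ, ∀ m : Fin (n + 2) → ℤ,
      p (n + 1) m = (2 * π * Complex.I) *
        ((∑ j : Fin (n + 1), (m j.castSucc : ℂ)) * p n (fun i => m i.castSucc) -
          ∑ j : Fin (n + 1), (m j.castSucc : ℂ) *
            p n (fun i => if i = j then m i.castSucc + m (Fin.last (n + 1))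
              else m i.castSucc)))
    (n : ℕ) (hn : 1 ≤ n) (m : Fin (n + 1) → ℤ) :
    p n m = (2 * π * Complex.I) ^ n * (m 0 : ℂ) *
      ∑ I : Finset (Fin n), (-1 : ℂ) ^ I.card *
        ((((m 0 + ∑ j ∈ I, m j.succ : ℤ) : ℝ) ^ (n - 1) *
          |((m 0 + ∑ j ∈ I, m j.succ : ℤ) : ℝ)| : ℝ) : ℂ) := by
  revert m
  induction n, hn using Nat.le_induction with
  | base =>
    intro m
    have h := hrec 0 m
    simp only [Fin.sum_univ_succ, Fin.sum_univ_zero, add_zero, Fin.castSucc_zero] at h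
    rw [h, h0, h0]
    rw [show (Finset.univ : Finset (Finset (Fin 1))) = {∅, {0}} from by decide]
    rw [Finset.sum_insert (by decide), Finset.sum_singleton]
    have h1 : (0 : Fin 1).succ = Fin.last 1 := rfl
    have cast_abs : ∀ a : ℤ, ((|a| : ℤ) : ℂ) = ((|(a:ℝ)| : ℝ) : ℂ) := fun a => by norm_cast
    simp only [Finset.card_empty, Finset.card_singleton, Finset.sum_empty, Finset.sum_singleton,
      pow_zero, pow_one, one_mul, add_zero, h1, eq_self_iff_true, if_true, ite_true, cast_abs, Fin.castSucc_zero]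
    push_cast
    ring_nf
  | succ n hn ih =>
    obtain ⟨d, rfl⟩ : ∃ d, n = d + 1 := ⟨n - 1, (Nat.succ_pred_eq_of_pos hn).symm⟩
    intro m
    simp only [Nat.add_sub_cancel] at ih ⊢
    have hnotmem : ∀ I : Finset (Fin (d+1)), Fin.last (d+1) ∉ I.map Fin.castSuccEmb := by
      intro I h
      obtain ⟨a, -, ha⟩ := Finset.mem_map.1 h
      exact (Fin.castSucc_lt_last a).ne ha
    -- pieces of the LHS via the induction hypothesis
    have hA := ih (fun i => m i.castSucc)
    simp only [Fin.castSucc_zero] at hA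
    have hB := ih (fun i => if i = 0 then m i.castSucc + m (Fin.last (d+2)) else m i.castSucc)
    simp only [Fin.castSucc_zero, Fin.succ_ne_zero, eq_self_iff_true, if_true, ite_true,
      if_false, ite_false] at hB
    rw [show ((m 0 + m (Fin.last (d+2)) : ℤ) : ℂ) = (m 0 : ℂ) + (m (Fin.last (d+2)) : ℂ) from by
      push_cast; ring] at hB
    have e1 : ∀ x : ℤ, m 0 + m (Fin.last (d+2)) + x = m 0 + x + m (Fin.last (d+2)) :=
      fun x => by ring
    simp only [e1] at hB
    have hC : ∀ k : Fin (d+1),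
        p (d+1) (fun i => if i = k.succ then m i.castSucc + m (Fin.last (d+2)) else m i.castSucc)
          = (2*π*Complex.I)^(d+1) * ((m 0 : ℤ) : ℂ) *
            ∑ I : Finset (Fin (d+1)), (-1:ℂ)^I.card *
              (if k ∈ I then
                ((((m 0 + (∑ j ∈ I, m j.succ.castSucc) + m (Fin.last (d+2)) : ℤ) : ℝ) ^ d *
                  |((m 0 + (∑ j ∈ I, m j.succ.castSucc) + m (Fin.last (d+2)) : ℤ) : ℝ)| : ℝ) : ℂ)
              else
                ((((m 0 + ∑ j ∈ I, m j.succ.castSucc : ℤ) : ℝ) ^ d *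
                  |((m 0 + ∑ j ∈ I, m j.succ.castSucc : ℤ) : ℝ)| : ℝ) : ℂ)) := by
      intro k
      have h := ih (fun i => if i = k.succ then m i.castSucc + m (Fin.last (d+2)) else m i.castSucc)
      simp only [Fin.castSucc_zero, Fin.succ_inj,
        if_neg (Ne.symm (Fin.succ_ne_zero k))] at h
      have e2 : ∀ I : Finset (Fin (d+1)),
          m 0 + (∑ j ∈ I, (if j = k then m j.succ.castSucc + m (Fin.last (d+2)) else m j.succ.castSucc))
          = (if k ∈ I then m 0 + (∑ j ∈ I, m j.succ.castSucc) + m (Fin.last (d+2))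
             else m 0 + ∑ j ∈ I, m j.succ.castSucc) := by
        intro I
        have h2 : (∑ j ∈ I, (if j = k then m j.succ.castSucc + m (Fin.last (d+2)) else m j.succ.castSucc))
            = (∑ j ∈ I, m j.succ.castSucc) + (if k ∈ I then m (Fin.last (d+2)) else 0) := by
          rw [← Finset.sum_ite_eq' I k (fun _ => m (Fin.last (d+2))), ← Finset.sum_add_distrib]
          refine Finset.sum_congr rfl fun j _ => ?_
          split_ifs <;> simp
        rw [h2]
        split_ifs <;> ring
      simp only [e2] at h
      simp only [apply_ite (fun t : ℤ => ((((t : ℝ)) ^ d * |((t : ℝ))| : ℝ) : ℂ))] at h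
      exact h
    have hpull : (∑ k : Fin (d+1), ((m k.succ.castSucc : ℤ) : ℂ) *
          p (d+1) (fun i => if i = k.succ then m i.castSucc + m (Fin.last (d+2)) else m i.castSucc))
        = (2*π*Complex.I)^(d+1) * ((m 0 : ℤ) : ℂ) *
          ∑ k : Fin (d+1), ((m k.succ.castSucc : ℤ) : ℂ) *
            ∑ I : Finset (Fin (d+1)), (-1:ℂ)^I.card *
              (if k ∈ I then
                ((((m 0 + (∑ j ∈ I, m j.succ.castSucc) + m (Fin.last (d+2)) : ℤ) : ℝ) ^ d *
                  |((m 0 + (∑ j ∈ I, m j.succ.castSucc) + m (Fin.last (d+2)) : ℤ) : ℝ)| : ℝ) : ℂ)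
              else
                ((((m 0 + ∑ j ∈ I, m j.succ.castSucc : ℤ) : ℝ) ^ d *
                  |((m 0 + ∑ j ∈ I, m j.succ.castSucc : ℤ) : ℝ)| : ℝ) : ℂ)) := by
      rw [Finset.mul_sum]
      refine Finset.sum_congr rfl fun k _ => ?_
      rw [hC k]; ring
    -- rewrite the recursion
    rw [hrec (d+1) m,
      Fin.sum_univ_succ (f := fun j : Fin (d+1+1) => ((m j.castSucc : ℤ) : ℂ)),
      Fin.sum_univ_succ (f := fun j : Fin (d+1+1) => ((m j.castSucc : ℤ) : ℂ) *
        p (d+1) (fun i => if i = j then m i.castSucc + m (Fin.last (d+1+1)) else m i.castSucc))]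
    simp only [Fin.castSucc_zero]
    rw [hA, hB, hpull]
    -- rewrite the RHS sum
    rw [sum_finset_split (d+1) (g := fun J : Finset (Fin (d+2)) => (-1:ℂ)^J.card *
        ((((m 0 + ∑ j ∈ J, m j.succ : ℤ) : ℝ) ^ (d+1) *
          |((m 0 + ∑ j ∈ J, m j.succ : ℤ) : ℝ)| : ℝ) : ℂ))]
    have hsummap : ∀ I : Finset (Fin (d+1)),
        (∑ j ∈ I.map Fin.castSuccEmb, m j.succ) = ∑ i ∈ I, m i.succ.castSucc := by
      intro I
      rw [Finset.sum_map]
      refine Finset.sum_congr rfl fun i _ => ?_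
      simp only [Fin.coe_castSuccEmb, Fin.succ_castSucc]
    have hsumins : ∀ I : Finset (Fin (d+1)),
        (∑ j ∈ insert (Fin.last (d+1)) (I.map Fin.castSuccEmb), m j.succ)
          = m (Fin.last (d+2)) + ∑ i ∈ I, m i.succ.castSucc := by
      intro I
      rw [Finset.sum_insert (hnotmem I), hsummap I, Fin.succ_last]
    have hcard : ∀ I : Finset (Fin (d+1)),
        (insert (Fin.last (d+1)) (I.map Fin.castSuccEmb)).card = I.card + 1 :=
      fun I => by rw [Finset.card_insert_of_notMem (hnotmem I), Finset.card_map]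
    simp only [hcard, hsummap, hsumins, Finset.card_map]
    have hterm : ∀ I : Finset (Fin (d+1)),
        ((-1:ℂ)^I.card * ((((m 0 + ∑ i ∈ I, m i.succ.castSucc : ℤ) : ℝ) ^ (d+1) *
            |((m 0 + ∑ i ∈ I, m i.succ.castSucc : ℤ) : ℝ)| : ℝ) : ℂ)
          + (-1:ℂ)^(I.card+1) *
            ((((m 0 + (m (Fin.last (d+2)) + ∑ i ∈ I, m i.succ.castSucc) : ℤ) : ℝ) ^ (d+1) *
              |((m 0 + (m (Fin.last (d+2)) + ∑ i ∈ I, m i.succ.castSucc) : ℤ) : ℝ)| : ℝ) : ℂ))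
        = (-1:ℂ)^I.card *
            ((((m 0 : ℤ) : ℂ) + ∑ k ∈ I, ((m k.succ.castSucc : ℤ) : ℂ)) *
              ((((m 0 + ∑ j ∈ I, m j.succ.castSucc : ℤ) : ℝ) ^ d *
                |((m 0 + ∑ j ∈ I, m j.succ.castSucc : ℤ) : ℝ)| : ℝ) : ℂ)
            - (((m 0 : ℤ) : ℂ) + ∑ k ∈ I, ((m k.succ.castSucc : ℤ) : ℂ) + ((m (Fin.last (d+2)) : ℤ) : ℂ)) *
              ((((m 0 + (∑ j ∈ I, m j.succ.castSucc) + m (Fin.last (d+2)) : ℤ) : ℝ) ^ d *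
                |((m 0 + (∑ j ∈ I, m j.succ.castSucc) + m (Fin.last (d+2)) : ℤ) : ℝ)| : ℝ) : ℂ)) := by
      intro I
      rw [show m 0 + (m (Fin.last (d+2)) + ∑ i ∈ I, m i.succ.castSucc)
          = m 0 + (∑ i ∈ I, m i.succ.castSucc) + m (Fin.last (d+2)) from by ring]
      push_cast
      ring
    simp only [hterm]
    have hkey := key_identity (d+1) (fun k => ((m k.succ.castSucc : ℤ) : ℂ))
      ((m 0 : ℤ) : ℂ) ((m (Fin.last (d+2)) : ℤ) : ℂ)
      (fun I => ((((m 0 + ∑ j ∈ I, m j.succ.castSucc : ℤ) : ℝ) ^ d *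
          |((m 0 + ∑ j ∈ I, m j.succ.castSucc : ℤ) : ℝ)| : ℝ) : ℂ))
      (fun I => ((((m 0 + (∑ j ∈ I, m j.succ.castSucc) + m (Fin.last (d+2)) : ℤ) : ℝ) ^ d *
          |((m 0 + (∑ j ∈ I, m j.succ.castSucc) + m (Fin.last (d+2)) : ℤ) : ℝ)| : ℝ) : ℂ))
    beta_reduce at hkey
    linear_combination ((2*π*Complex.I) * (2*π*Complex.I)^(d+1) * ((m 0 : ℤ) : ℂ)) * hkey
end

section
/- Let α be a real number with 1/2 < α < 1/√2. Then the function x ↦ α·x^{α−1} (the derivative of F(x) = x^α) is square-integrable on the interval (0,1), but the function x ↦ α²·x^{α²−1} (the derivative of F∘F, i.e. of x ↦ x^{α²}) is not square-integrable on (0,1). In other words, ∫₀¹ x^{2α−2} dx < ∞ while ∫₀¹ x^{2α²−2} dx = ∞. -/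
open MeasureTheory Set

theorem integrableOn_Ioo_sq_const_mul_rpow_iff {c s t : ℝ} (hc : c ≠ 0) (ht : 0 < t) :
    IntegrableOn (fun x : ℝ => (c * x ^ s) ^ 2) (Ioo 0 t) ↔ -1 < 2 * s := by
  have hsq : EqOn (fun x : ℝ => (c * x ^ s) ^ 2) (fun x => c ^ 2 * x ^ (2 * s)) (Ioo 0 t) :=
    fun x hx => by
      dsimp only
      rw [mul_pow, mul_comm 2 s, ← Real.rpow_mul_natCast hx.1.le, Nat.cast_ofNat]
  rw [integrableOn_congr_fun hsq measurableSet_Ioo, IntegrableOn,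
    integrable_const_mul_iff (pow_ne_zero 2 hc).isUnit]
  exact intervalIntegral.integrableOn_Ioo_rpow_iff ht

theorem sq_lt_half_of_lt_inv_sqrt_two {a : ℝ} (ha : 0 ≤ a) (h : a < 1 / Real.sqrt 2) :
    a ^ 2 < 1 / 2 :=
  calc a ^ 2 < (1 / Real.sqrt 2) ^ 2 := by gcongr
    _ = 1 / 2 := by rw [div_pow, Real.sq_sqrt zero_le_two, one_pow]

/-- For `1/2 < α < 1/√2`, the derivative `x ↦ α·x^{α-1}` of `F(x) = x^α` is
square-integrable on `(0,1)`, but the derivative `x ↦ α²·x^{α²-1}` of `F∘F` is not. -/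
theorem sobolev_homeo_not_group (α : ℝ) (h1 : 1 / 2 < α) (h2 : α < 1 / Real.sqrt 2) :
    IntegrableOn (fun x : ℝ => (α * x ^ (α - 1)) ^ 2) (Set.Ioo 0 1) ∧
    ¬ IntegrableOn (fun x : ℝ => (α ^ 2 * x ^ (α ^ 2 - 1)) ^ 2) (Set.Ioo 0 1) := by
  have hα : 0 < α := by linarith
  have hα_sq : α ^ 2 < 1 / 2 := sq_lt_half_of_lt_inv_sqrt_two hα.le h2
  refine ⟨(integrableOn_Ioo_sq_const_mul_rpow_iff hα.ne' one_pos).2 (by linarith), fun h => ?_⟩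
  have hexp := (integrableOn_Ioo_sq_const_mul_rpow_iff (pow_pos hα 2).ne' one_pos).1 h
  linarith
end

section
/- Let n ∈ ℕ and let s, k be natural numbers with s ≥ 1 and k ≥ s + 1. Let p : ℤ^{n+1} → ℂ satisfy |p(m₀,…,mₙ)| ≤ C·|m₀|^s ⋯ |mₙ|^s for all (m₀,…,mₙ) ∈ ℤ^{n+1} and some constant C > 0. Then there exists a constant C′ > 0 (depending only on n, k, s and C) such that for all finitely supported families a₀, …, aₙ : ℤ → ℂ, Σ_{l∈ℤ} (1+l²)^{k−s} · |Σ_{m₀+⋯+mₙ=l} p(m₀,…,mₙ)·a₀(m₀)⋯aₙ(mₙ)|² ≤ C′ · ∏_{j=0}^{n} ( Σ_{m∈ℤ} (1+m²)^{k} |a_j(m)|² ). -/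
/-!
Write `t = k - s`. On the fiber `m₀ + ⋯ + mₙ = l` one has `(1 + l²)^t ≲ ∑ⱼ (1 + mⱼ²)^t`.
Cauchy–Schwarz on the fiber with the weight `u(m) = ∑ⱼ ∏_{i ≠ j} (1 + mᵢ²)^{-t}`, for which
`u(m) ∏ᵢ (1 + mᵢ²)^t = ∑ⱼ (1 + mⱼ²)^t`, converts the output weight `(1 + l²)^t` into the
product `∏ᵢ (1 + mᵢ²)^t`, at the cost of the factor `∑_{fiber} u`. A point of the fiber is
determined by its coordinates off any one index `j`, so this factor is at most
`(n + 1) (∑_m (1 + m²)^{-t})^n`, finite because `t ≥ 1`. The symbol bound turns the remaining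
`|mᵢ|^{2s}` into `(1 + mᵢ²)^s`, and summing over `l` gives the product of the `H^k` norms.
-/

open Finset

namespace MultilinearSymbol

variable {ι : Type*} [Fintype ι]

def weight (k : ℕ) (m : ℤ) : ℝ := (1 + (m : ℝ) ^ 2) ^ k

lemma one_le_weight (k : ℕ) (m : ℤ) : 1 ≤ weight k m :=
  one_le_pow₀ (le_add_of_nonneg_right (sq_nonneg _))

lemma weight_pos (k : ℕ) (m : ℤ) : 0 < weight k m :=
  zero_lt_one.trans_le (one_le_weight k m)

lemma weight_add (s t : ℕ) (m : ℤ) : weight (s + t) m = weight s m * weight t m :=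
  pow_add _ _ _

lemma abs_pow_sq_le_weight (s : ℕ) (m : ℤ) : (((|m| : ℤ) : ℝ) ^ s) ^ 2 ≤ weight s m := by
  rw [← pow_mul, mul_comm, pow_mul, Int.cast_abs, sq_abs]
  exact pow_le_pow_left₀ (sq_nonneg _) (le_add_of_nonneg_left zero_le_one) s

lemma summable_inv_weight {t : ℕ} (ht : 1 ≤ t) : Summable fun m : ℤ => (weight t m)⁻¹ := by
  refine (Real.summable_one_div_int_pow.2 one_lt_two).of_norm_bounded_eventually ?_
  filter_upwards [Filter.eventually_cofinite_ne 0] with m hm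
  have hm2 : (0 : ℝ) < (m : ℝ) ^ 2 := by positivity
  rw [Real.norm_of_nonneg (inv_nonneg.2 (weight_pos t m).le), one_div]
  calc (weight t m)⁻¹ ≤ (weight 1 m)⁻¹ :=
        inv_anti₀ (weight_pos 1 m)
          (pow_le_pow_right₀ (le_add_of_nonneg_right (sq_nonneg _)) ht)
    _ ≤ ((m : ℝ) ^ 2)⁻¹ := inv_anti₀ hm2 (by simp [weight])

lemma tsum_inv_weight_pos {t : ℕ} (ht : 1 ≤ t) : 0 < ∑' m : ℤ, (weight t m)⁻¹ :=
  (summable_inv_weight ht).tsum_pos (fun m => (inv_pos.2 (weight_pos t m)).le) 0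
    (inv_pos.2 (weight_pos t 0))

lemma weight_sum_le [Nonempty ι] {t : ℕ} (ht : 1 ≤ t) (m : ι → ℤ) :
    weight t (∑ i, m i) ≤ (Fintype.card ι : ℝ) ^ (2 * t) * ∑ i, weight t (m i) := by
  have hN : (1 : ℝ) ≤ Fintype.card ι := Nat.one_le_cast.2 Fintype.card_pos
  have hbase : 1 + ((∑ i, m i : ℤ) : ℝ) ^ 2 ≤
      Fintype.card ι * ∑ i, (1 + ((m i : ℤ) : ℝ) ^ 2) := by
    have hcs := sq_sum_le_card_mul_sum_sq (s := univ) (f := fun i => ((m i : ℤ) : ℝ))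
    rw [card_univ] at hcs
    rw [sum_add_distrib, sum_const, card_univ, nsmul_one]
    push_cast at hcs ⊢
    nlinarith [sum_nonneg fun i (_ : i ∈ univ) => sq_nonneg ((m i : ℤ) : ℝ)]
  obtain ⟨r, rfl⟩ := Nat.exists_eq_add_of_le' ht
  calc weight (r + 1) (∑ i, m i)
      ≤ (Fintype.card ι * ∑ i, (1 + ((m i : ℤ) : ℝ) ^ 2)) ^ (r + 1) :=
        pow_le_pow_left₀ (by positivity) hbase _
    _ ≤ (Fintype.card ι : ℝ) ^ (r + 1) *
          ((Fintype.card ι : ℝ) ^ r * ∑ i, weight (r + 1) (m i)) := by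
        rw [mul_pow]
        gcongr
        simpa [weight] using pow_sum_le_card_mul_sum_pow (s := univ) (n := r)
          (f := fun i => 1 + ((m i : ℤ) : ℝ) ^ 2) fun i _ => by positivity
    _ ≤ (Fintype.card ι : ℝ) ^ (2 * (r + 1)) * ∑ i, weight (r + 1) (m i) := by
        rw [← mul_assoc, ← pow_add]
        exact mul_le_mul_of_nonneg_right (pow_le_pow_right₀ hN (by omega))
          (sum_nonneg fun i _ => (weight_pos _ _).le)

lemma sum_fiber_prod_ne_le_tsum_pow [DecidableEq ι] {f : ℤ → ℝ} (hf : ∀ x, 0 ≤ f x) (hsum : Summable f)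
    {F : Finset (ι → ℤ)} {l : ℤ} (hF : ∀ m ∈ F, ∑ i, m i = l) (j : ι) :
    ∑ m ∈ F, ∏ i : {i // i ≠ j}, f (m i) ≤ (∑' x, f x) ^ (Fintype.card ι - 1) := by
  let restrict : (ι → ℤ) → ({i // i ≠ j} → ℤ) := fun m i => m i
  have hinj : Set.InjOn restrict F := by
    intro m hm m' hm' h
    have hoff : ∀ i : {i // i ≠ j}, m i = m' i := fun i => congrFun h i
    have hsum_eq := (hF m hm).trans (hF m' hm').symm
    rw [Fintype.sum_eq_add_sum_subtype_ne _ j, Fintype.sum_eq_add_sum_subtype_ne _ j,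
      Fintype.sum_congr _ _ hoff, add_left_inj] at hsum_eq
    funext i
    by_cases hij : i = j
    · exact hij ▸ hsum_eq
    · exact hoff ⟨i, hij⟩
  calc ∑ m ∈ F, ∏ i : {i // i ≠ j}, f (m i)
      = ∑ y ∈ F.image restrict, ∏ i, f (y i) :=
        (sum_image (f := fun y => ∏ i, f (y i)) hinj).symm
    _ ≤ ∑ y ∈ Fintype.piFinset fun i : {i // i ≠ j} => F.image (· i), ∏ i, f (y i) := by
        refine sum_le_sum_of_subset_of_nonneg ?_ fun y _ _ => prod_nonneg fun i _ => hf _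
        rintro _ hy
        obtain ⟨m, hm, rfl⟩ := mem_image.1 hy
        exact Fintype.mem_piFinset.2 fun i => mem_image_of_mem _ hm
    _ = ∏ i : {i // i ≠ j}, ∑ x ∈ F.image (· i), f x := (prod_univ_sum _ _).symm
    _ ≤ ∏ _i : {i // i ≠ j}, ∑' x, f x :=
        prod_le_prod (fun i _ => sum_nonneg fun x _ => hf x)
          fun i _ => hsum.sum_le_tsum _ fun x _ => hf x
    _ = (∑' x, f x) ^ (Fintype.card ι - 1) := by
        rw [prod_const, card_univ, Fintype.card_subtype_compl, Fintype.card_subtype_eq]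

lemma norm_mul_prod_sq_mul_prod_weight_le {s t : ℕ} {C : ℝ} {c : ℂ} {m : ι → ℤ} (x : ι → ℂ)
    (hc : ‖c‖ ≤ C * ∏ i, ((|m i| : ℤ) : ℝ) ^ s) :
    ‖c * ∏ i, x i‖ ^ 2 * ∏ i, weight t (m i) ≤ C ^ 2 * ∏ i, weight (s + t) (m i) * ‖x i‖ ^ 2 := by
  calc ‖c * ∏ i, x i‖ ^ 2 * ∏ i, weight t (m i)
      = ‖c‖ ^ 2 * ∏ i, ‖x i‖ ^ 2 * weight t (m i) := by
        rw [norm_mul, norm_prod, mul_pow, ← prod_pow, mul_assoc, ← prod_mul_distrib]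
    _ ≤ (C * ∏ i, ((|m i| : ℤ) : ℝ) ^ s) ^ 2 * ∏ i, ‖x i‖ ^ 2 * weight t (m i) := by
        gcongr
        exact prod_nonneg fun i _ => mul_nonneg (sq_nonneg _) (weight_pos t _).le
    _ = C ^ 2 * ∏ i, (((|m i| : ℤ) : ℝ) ^ s) ^ 2 * (‖x i‖ ^ 2 * weight t (m i)) := by
        rw [mul_pow, ← prod_pow, mul_assoc, ← prod_mul_distrib]
    _ ≤ C ^ 2 * ∏ i, weight s (m i) * (‖x i‖ ^ 2 * weight t (m i)) := by
        refine mul_le_mul_of_nonneg_left (prod_le_prod (fun i _ => ?_) fun i _ => ?_) (sq_nonneg C)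
        · exact mul_nonneg (sq_nonneg _) (mul_nonneg (sq_nonneg _) (weight_pos t _).le)
        · exact mul_le_mul_of_nonneg_right (abs_pow_sq_le_weight s (m i))
            (mul_nonneg (sq_nonneg _) (weight_pos t _).le)
    _ = C ^ 2 * ∏ i, weight (s + t) (m i) * ‖x i‖ ^ 2 := by
        simp_rw [weight_add]
        congr 1
        exact prod_congr rfl fun i _ => by ring

variable [DecidableEq ι]

noncomputable def fiberWeight (t : ℕ) (m : ι → ℤ) : ℝ :=
  ∑ j : ι, ∏ i : {i // i ≠ j}, (weight t (m i))⁻¹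

lemma fiberWeight_pos [Nonempty ι] (t : ℕ) (m : ι → ℤ) : 0 < fiberWeight t m :=
  sum_pos (fun _ _ => prod_pos fun _ _ => inv_pos.2 (weight_pos _ _)) univ_nonempty

lemma fiberWeight_mul_prod_weight (t : ℕ) (m : ι → ℤ) :
    fiberWeight t m * ∏ i, weight t (m i) = ∑ i, weight t (m i) := by
  rw [fiberWeight, sum_mul]
  refine sum_congr rfl fun j _ => ?_
  rw [Fintype.prod_eq_mul_prod_subtype_ne _ j, prod_inv_distrib, mul_left_comm,
    inv_mul_cancel₀ (prod_pos fun _ _ => weight_pos _ _).ne', mul_one]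

lemma sum_fiberWeight_le {t : ℕ} (ht : 1 ≤ t) {F : Finset (ι → ℤ)} {l : ℤ}
    (hF : ∀ m ∈ F, ∑ i, m i = l) :
    ∑ m ∈ F, fiberWeight t m ≤
      Fintype.card ι * (∑' x, (weight t x)⁻¹) ^ (Fintype.card ι - 1) := by
  calc ∑ m ∈ F, fiberWeight t m
      = ∑ j : ι, ∑ m ∈ F, ∏ i : {i // i ≠ j}, (weight t (m i))⁻¹ := by
        simp only [fiberWeight]
        exact sum_comm
    _ ≤ ∑ _j : ι, (∑' x, (weight t x)⁻¹) ^ (Fintype.card ι - 1) :=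
        sum_le_sum fun j _ => sum_fiber_prod_ne_le_tsum_pow (fun x => (inv_pos.2 (weight_pos t x)).le)
          (summable_inv_weight ht) hF j
    _ = _ := by rw [sum_const, card_univ, nsmul_eq_mul]

lemma weight_sum_mul_sq_div_fiberWeight_le [Nonempty ι] {t : ℕ} (ht : 1 ≤ t) (m : ι → ℤ)
    (y : ℝ) :
    weight t (∑ i, m i) * (y ^ 2 / fiberWeight t m) ≤
      (Fintype.card ι : ℝ) ^ (2 * t) * (y ^ 2 * ∏ i, weight t (m i)) := by
  have hQ : 0 < ∑ i, weight t (m i) := sum_pos (fun _ _ => weight_pos _ _) univ_nonempty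
  have hP : 0 < ∏ i, weight t (m i) := prod_pos fun _ _ => weight_pos _ _
  calc weight t (∑ i, m i) * (y ^ 2 / fiberWeight t m)
      = weight t (∑ i, m i) / (∑ i, weight t (m i)) * (y ^ 2 * ∏ i, weight t (m i)) := by
        rw [← fiberWeight_mul_prod_weight t m]
        field_simp
    _ ≤ (Fintype.card ι : ℝ) ^ (2 * t) * (y ^ 2 * ∏ i, weight t (m i)) := by
        gcongr
        exact (div_le_iff₀ hQ).2 (weight_sum_le ht m)

noncomputable def fiberConstant (ι : Type*) [Fintype ι] (t : ℕ) : ℝ :=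
  (Fintype.card ι : ℝ) ^ (2 * t) *
    (Fintype.card ι * (∑' x, (weight t x)⁻¹) ^ (Fintype.card ι - 1))

lemma fiberConstant_pos (ι : Type*) [Fintype ι] [Nonempty ι] {t : ℕ} (ht : 1 ≤ t) :
    0 < fiberConstant ι t := by
  have hK := tsum_inv_weight_pos ht
  have hι : 0 < Fintype.card ι := Fintype.card_pos
  unfold fiberConstant
  positivity

theorem weight_mul_norm_sum_fiber_sq_le [Nonempty ι] {t : ℕ} (ht : 1 ≤ t) {F : Finset (ι → ℤ)}
    {l : ℤ} (hF : ∀ m ∈ F, ∑ i, m i = l) (g : (ι → ℤ) → ℂ) :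
    weight t l * ‖∑ m ∈ F, g m‖ ^ 2 ≤
      fiberConstant ι t * ∑ m ∈ F, ‖g m‖ ^ 2 * ∏ i, weight t (m i) := by
  have hu := fun m : ι → ℤ => fiberWeight_pos t m
  have hK := tsum_inv_weight_pos ht
  have hcs : (∑ m ∈ F, ‖g m‖) ^ 2 ≤
      (∑ m ∈ F, fiberWeight t m) * ∑ m ∈ F, ‖g m‖ ^ 2 / fiberWeight t m :=
    sum_sq_le_sum_mul_sum_of_sq_le_mul F (fun m _ => (hu m).le)
      (fun m _ => div_nonneg (sq_nonneg _) (hu m).le)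
      fun m _ => by rw [mul_div_cancel₀ _ (hu m).ne']
  calc weight t l * ‖∑ m ∈ F, g m‖ ^ 2
      ≤ weight t l * ((∑ m ∈ F, fiberWeight t m) * ∑ m ∈ F, ‖g m‖ ^ 2 / fiberWeight t m) :=
        mul_le_mul_of_nonneg_left
          ((pow_le_pow_left₀ (norm_nonneg _) (norm_sum_le F g) 2).trans hcs) (weight_pos t l).le
    _ = (∑ m ∈ F, fiberWeight t m) *
          ∑ m ∈ F, weight t (∑ i, m i) * (‖g m‖ ^ 2 / fiberWeight t m) := by
        rw [mul_left_comm, mul_sum]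
        congr 1
        exact sum_congr rfl fun m hm => by rw [hF m hm]
    _ ≤ (Fintype.card ι * (∑' x, (weight t x)⁻¹) ^ (Fintype.card ι - 1)) *
          ∑ m ∈ F, (Fintype.card ι : ℝ) ^ (2 * t) * (‖g m‖ ^ 2 * ∏ i, weight t (m i)) := by
        refine mul_le_mul (sum_fiberWeight_le ht hF)
          (sum_le_sum fun m _ => weight_sum_mul_sq_div_fiberWeight_le ht m _)
          (sum_nonneg fun m _ => mul_nonneg (weight_pos _ _).le
            (div_nonneg (sq_nonneg _) (hu m).le)) (by positivity)
    _ = _ := by rw [← mul_sum, fiberConstant]; ring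

theorem tsum_weight_mul_norm_sum_fiber_sq_le [Nonempty ι] {t : ℕ} (ht : 1 ≤ t)
    (S : Finset (ι → ℤ)) {g : (ι → ℤ) → ℂ} (hg : ∀ m ∉ S, g m = 0) :
    ∑' l : ℤ, weight t l * ‖∑' m : ι → ℤ, if ∑ i, m i = l then g m else 0‖ ^ 2 ≤
      fiberConstant ι t * ∑ m ∈ S, ‖g m‖ ^ 2 * ∏ i, weight t (m i) := by
  have hfiber : ∀ l : ℤ, (∑' m : ι → ℤ, if ∑ i, m i = l then g m else 0) =
      ∑ m ∈ S with ∑ i, m i = l, g m := by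
    intro l
    rw [sum_filter]
    exact tsum_eq_sum fun m hm => by simp [hg m hm]
  simp only [hfiber]
  rw [tsum_eq_sum (s := S.image fun m => ∑ i, m i) fun l hl => ?_]
  · calc ∑ l ∈ S.image (fun m => ∑ i, m i), weight t l * ‖∑ m ∈ S with ∑ i, m i = l, g m‖ ^ 2
        ≤ ∑ l ∈ S.image (fun m => ∑ i, m i), fiberConstant ι t *
            ∑ m ∈ S with ∑ i, m i = l, ‖g m‖ ^ 2 * ∏ i, weight t (m i) :=
          sum_le_sum fun l _ =>
            weight_mul_norm_sum_fiber_sq_le ht (fun m hm => (mem_filter.1 hm).2) g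
      _ = fiberConstant ι t * ∑ m ∈ S, ‖g m‖ ^ 2 * ∏ i, weight t (m i) := by
          rw [← mul_sum, sum_fiberwise_of_maps_to fun m hm => mem_image_of_mem _ hm]
  · rw [filter_eq_empty_iff.2 fun m hm hml => hl (mem_image.2 ⟨m, hm, hml⟩), sum_empty,
      norm_zero]
    ring

end MultilinearSymbol

open MultilinearSymbol

theorem multilinear_symbol_estimate_general (n s k : ℕ) (hk : s + 1 ≤ k)
    (C : ℝ) (hC : 0 < C) (p : (Fin (n + 1) → ℤ) → ℂ)
    (hp : ∀ m : Fin (n + 1) → ℤ,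
      ‖p m‖ ≤ C * ∏ i, ((|m i| : ℤ) : ℝ) ^ s) :
    ∃ C' > 0, ∀ a : Fin (n + 1) → ℤ →₀ ℂ,
      (∑' l : ℤ, (1 + (l : ℝ) ^ 2) ^ (k - s) *
        ‖(∑' m : Fin (n + 1) → ℤ,
          if (∑ i, m i) = l then p m * ∏ i, a i (m i) else 0)‖ ^ 2) ≤
      C' * ∏ i, ∑ mm ∈ (a i).support,
        (1 + (mm : ℝ) ^ 2) ^ k * ‖a i mm‖ ^ 2 := by
  have ht : 1 ≤ k - s := by omega
  have hB := fiberConstant_pos (Fin (n + 1)) ht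
  refine ⟨fiberConstant (Fin (n + 1)) (k - s) * C ^ 2, by positivity, fun a => ?_⟩
  set S := Fintype.piFinset fun i => (a i).support
  have hsupp : ∀ m ∉ S, p m * ∏ i, a i (m i) = 0 := by
    intro m hm
    obtain ⟨i, hi⟩ := not_forall.1 (mt Fintype.mem_piFinset.2 hm)
    exact mul_eq_zero_of_right _ (prod_eq_zero (mem_univ i) (Finsupp.notMem_support_iff.1 hi))
  calc _ ≤ fiberConstant (Fin (n + 1)) (k - s) *
        ∑ m ∈ S, ‖p m * ∏ i, a i (m i)‖ ^ 2 * ∏ i, weight (k - s) (m i) :=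
        tsum_weight_mul_norm_sum_fiber_sq_le ht S hsupp
    _ ≤ fiberConstant (Fin (n + 1)) (k - s) *
        ∑ m ∈ S, C ^ 2 * ∏ i, weight k (m i) * ‖a i (m i)‖ ^ 2 := by
        refine mul_le_mul_of_nonneg_left (sum_le_sum fun m _ => ?_) hB.le
        simpa only [Nat.add_sub_cancel' (by omega : s ≤ k)] using
          norm_mul_prod_sq_mul_prod_weight_le (t := k - s) (fun i => a i (m i)) (hp m)
    _ = _ := by
        rw [← mul_sum, prod_univ_sum, mul_assoc]
        rfl

/-- If the symbol `p : ℤ^{n+1} → ℂ` satisfies `|p(m₀,…,mₙ)| ≤ C·|m₀|^s⋯|mₙ|^s`, then the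
associated `(n+1)`-multilinear Fourier multiplier operator is bounded from
`H^k × ⋯ × H^k` to `H^{k-s}` (expressed here on the level of finitely supported
Fourier coefficient sequences, using the weights `(1+m²)^k` for the `H^k` norms). -/
theorem multilinear_symbol_estimate (n s k : ℕ) (hs : 1 ≤ s) (hk : s + 1 ≤ k)
    (C : ℝ) (hC : 0 < C) (p : (Fin (n + 1) → ℤ) → ℂ)
    (hp : ∀ m : Fin (n + 1) → ℤ,
      ‖p m‖ ≤ C * ∏ i, ((|m i| : ℤ) : ℝ) ^ s) :
    ∃ C' > 0, ∀ a : Fin (n + 1) → ℤ →₀ ℂ,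
      (∑' l : ℤ, (1 + (l : ℝ) ^ 2) ^ (k - s) *
        ‖(∑' m : Fin (n + 1) → ℤ,
          if (∑ i, m i) = l then p m * ∏ i, a i (m i) else 0)‖ ^ 2) ≤
      C' * ∏ i, ∑ mm ∈ (a i).support,
        (1 + (mm : ℝ) ^ 2) ^ k * ‖a i mm‖ ^ 2 :=
  multilinear_symbol_estimate_general n s k hk C hC p hp
end
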